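/- arXiv:2602.09360 — 2 statements merged into one kernel-verified Lean document; each statement's English description precedes it below -/
import Mathlib

section
/- For any Σ_ucr-controllability set E from plant G to specification R, the automaton 𝒜(E) is a Σ_uc-admissible supervisor and the synchronous composition 𝒜(E)||G is cc-simulated by R; in particular the relation Φ_E = { ((W,x), z) : (x,z) ∈ W, W a state of 𝒜(E) } is a cc-simulation from 𝒜(E)||G to R. -/
/-- An automaton with state type `S` and event alphabet `E`:
a transition relation and a set of initial states. -/
structure Automaton (S : Type) (E : Type) where
  trans : S → E → S → Prop
  init : Set S

/-- Extension of the transition relation to finite event sequences. -/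
def TransSeq {S E : Type} (G : Automaton S E) : S → List E → S → Prop
  | x, [], x' => x = x'
  | x, σ :: s, x'' => ∃ x', G.trans x σ x' ∧ TransSeq G x' s x''

/-- `x` is `s`-reachable in `G`. -/
def ReachSeq {S E : Type} (G : Automaton S E) (s : List E) (x : S) : Prop :=
  ∃ x₀ ∈ G.init, TransSeq G x₀ s x

/-- `x` is reachable in `G`. -/
def Reachable {S E : Type} (G : Automaton S E) (x : S) : Prop :=
  ∃ s : List E, ReachSeq G s x

/-- The language of an automaton: all event sequences executable from some initial state. -/
def Lang {S E : Type} (G : Automaton S E) : Set (List E) :=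
  {s | ∃ x, ReachSeq G s x}

/-- `Φ` is a simulation from `G` to `R`. -/
def IsSimulation {X Z E : Type} (G : Automaton X E) (R : Automaton Z E)
    (Φ : Set (X × Z)) : Prop :=
  (∀ x₀ ∈ G.init, ∃ z₀ ∈ R.init, (x₀, z₀) ∈ Φ) ∧
  (∀ p ∈ Φ, ∀ (σ : E), ∀ x', G.trans p.1 σ x' →
    ∃ z', R.trans p.2 σ z' ∧ (x', z') ∈ Φ)

/-- `G` is simulated by `R` (`G ⊑ R`). -/
def Simulated {X Z E : Type} (G : Automaton X E) (R : Automaton Z E) : Prop :=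
  ∃ Φ, IsSimulation G R Φ

/-- `Φ` is a covariant-contravariant simulation from `G` to `R`, with required events `Sr`. -/
def IsCCSimulation {X Z E : Type} (Sr : Set E) (G : Automaton X E) (R : Automaton Z E)
    (Φ : Set (X × Z)) : Prop :=
  IsSimulation G R Φ ∧
  (∀ p ∈ Φ, ∀ σ ∈ Sr, ∀ z', R.trans p.2 σ z' →
    ∃ x', G.trans p.1 σ x' ∧ (x', z') ∈ Φ)

/-- `G` is cc-simulated by `R` (`G ⊑_cc R`). -/
def CCSimulated {X Z E : Type} (Sr : Set E) (G : Automaton X E) (R : Automaton Z E) : Prop :=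
  ∃ Φ, IsCCSimulation Sr G R Φ

/-- `Φ` is a bisimulation from `G` to `R`: both `Φ` and its inverse are simulations. -/
def IsBisimulation {X Z E : Type} (G : Automaton X E) (R : Automaton Z E)
    (Φ : Set (X × Z)) : Prop :=
  IsSimulation G R Φ ∧ IsSimulation R G {p | (p.2, p.1) ∈ Φ}

/-- `G` is bisimilar to `R` (`G ≃ R`). -/
def Bisimilar {X Z E : Type} (G : Automaton X E) (R : Automaton Z E) : Prop :=
  ∃ Φ, IsBisimulation G R Φ

/-- `Φ` is a `Σ_uc`-simulation from `G` to `R`. -/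
def IsUcSimulation {X Z E : Type} (Suc : Set E) (G : Automaton X E) (R : Automaton Z E)
    (Φ : Set (X × Z)) : Prop :=
  (∀ x₀ ∈ G.init, ∃ z₀ ∈ R.init, (x₀, z₀) ∈ Φ) ∧
  (∀ p ∈ Φ, ∀ σ ∈ Suc, ∀ x', G.trans p.1 σ x' →
    ∃ z', R.trans p.2 σ z' ∧ (x', z') ∈ Φ)

/-- `Φ` is a `Σ_ucr`-simulation from `G` to `R`:
(initial state), (Σ_uc-forward) and (Σ_r-backward). -/
def IsUcrSimulation {X Z E : Type} (Suc Sr : Set E) (G : Automaton X E) (R : Automaton Z E)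
    (Φ : Set (X × Z)) : Prop :=
  IsUcSimulation Suc G R Φ ∧
  (∀ p ∈ Φ, ∀ σ ∈ Sr, ∀ z', R.trans p.2 σ z' →
    ∃ x', G.trans p.1 σ x' ∧ (x', z') ∈ Φ)

/-- Synchronous composition `S || G`. -/
def Sync {Y X E : Type} (S : Automaton Y E) (G : Automaton X E) : Automaton (Y × X) E where
  trans p σ q := S.trans p.1 σ q.1 ∧ G.trans p.2 σ q.2
  init := S.init ×ˢ G.init

/-- `S` is `Σ_uc`-admissible with respect to `G`. -/
def Admissible {Y X E : Type} (Suc : Set E) (S : Automaton Y E) (G : Automaton X E) : Prop :=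
  ∀ p : Y × X, Reachable (Sync S G) p → ∀ σ ∈ Suc,
    (∃ x', G.trans p.2 σ x') → ∃ q, (Sync S G).trans p σ q

/-- `match_{G,R}(W, σ, W')`. -/
def MatchW {X Z E : Type} (G : Automaton X E) (R : Automaton Z E)
    (W : Set (X × Z)) (σ : E) (W' : Set (X × Z)) : Prop :=
  ∀ p ∈ W, ∀ x', G.trans p.1 σ x' →
    ∃ z', R.trans p.2 σ z' ∧ (x', z') ∈ W'

/-- `Ecs` is a `Σ_ucr`-controllability set from `G` to `R`. -/
def ControlSet {X Z E : Type} (Suc Sr : Set E) (G : Automaton X E) (R : Automaton Z E)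
    (Ecs : Set (Set (X × Z))) : Prop :=
  (∃ W₀ ∈ Ecs, ∀ x₀ ∈ G.init, ∃ z₀ ∈ R.init, (x₀, z₀) ∈ W₀) ∧
  (∀ W ∈ Ecs, ∀ σ ∈ Suc, ∃ W' ∈ Ecs, MatchW G R W σ W') ∧
  (∀ W ∈ Ecs, ∀ p ∈ W, ∀ σ ∈ Sr, ∀ z', R.trans p.2 σ z' →
    ∃ x', ∃ W' ∈ Ecs, G.trans p.1 σ x' ∧ (x', z') ∈ W' ∧ MatchW G R W σ W')

/-- The downward closure `P(E) = ⋃_{W ∈ E} 𝒫(W)`. -/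
def PE {X Z : Type} (Ecs : Set (Set (X × Z))) : Set (Set (X × Z)) :=
  {W | ∃ W' ∈ Ecs, W ⊆ W'}

/-- `⋃_{(x,z) ∈ W} {x' : x →σ x'} × {z' : z →σ z'}`. -/
def SuccSet {X Z E : Type} (G : Automaton X E) (R : Automaton Z E)
    (W : Set (X × Z)) (σ : E) : Set (X × Z) :=
  {q | ∃ p ∈ W, G.trans p.1 σ q.1 ∧ R.trans p.2 σ q.2}

/-- The automaton `𝒜(E)` induced by a `Σ_ucr`-controllability set `Ecs`.
Its states are the members of `P(Ecs)` (enforced in the transition relation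
and initial-state set). -/
def AutA {X Z E : Type} (G : Automaton X E) (R : Automaton Z E)
    (Ecs : Set (Set (X × Z))) : Automaton (Set (X × Z)) E where
  trans W σ W' :=
    W ∈ PE Ecs ∧ W' ∈ PE Ecs ∧
    (∃ p ∈ W, ∃ q ∈ W', G.trans p.1 σ q.1 ∧ R.trans p.2 σ q.2) ∧
    MatchW G R W σ W' ∧ W' ⊆ SuccSet G R W σ
  init := {W₀ | W₀ ∈ PE Ecs ∧ W₀ ⊆ G.init ×ˢ R.init ∧
    ∀ x₀ ∈ G.init, ∃ z₀ ∈ R.init, (x₀, z₀) ∈ W₀}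

/-- A deterministic automaton: a single initial state, and at most one
`σ`-successor of each state. -/
def Deterministic {S E : Type} (G : Automaton S E) : Prop :=
  (∃ x₀, G.init = {x₀}) ∧
  ∀ x (σ : E) x₁ x₂, G.trans x σ x₁ → G.trans x σ x₂ → x₁ = x₂

/-- `Φ` is uniform with respect to `Sr`. -/
def UniformRel {X Z E : Type} (Sr : Set E) (G : Automaton X E) (R : Automaton Z E)
    (Φ : Set (X × Z)) : Prop :=
  ∀ (s : List E), ∀ p₁ ∈ Φ, ∀ p₂ ∈ Φ,
    ReachSeq G s p₁.1 → ReachSeq G s p₂.1 → ReachSeq R s p₁.2 → ReachSeq R s p₂.2 →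
    ∀ σ ∈ Sr, (∃ z', R.trans p₁.2 σ z') → ∀ x₂', G.trans p₂.1 σ x₂' →
      ∃ z₂', R.trans p₂.2 σ z₂' ∧ (x₂', z₂') ∈ Φ

/-- The fixpoint operator `F_{(G,R)}`. -/
def Fop {X Z E : Type} (Suc Sr : Set E) (G : Automaton X E) (R : Automaton Z E)
    (Ecs : Set (Set (X × Z))) : Set (Set (X × Z)) :=
  {W | W ∈ Ecs ∧
    (∀ σ ∈ Suc, ∃ W' ∈ Ecs, MatchW G R W σ W') ∧
    (∀ p ∈ W, ∀ σ ∈ Sr, ∀ z', R.trans p.2 σ z' →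
      ∃ x', ∃ W' ∈ Ecs, G.trans p.1 σ x' ∧ (x', z') ∈ W' ∧ MatchW G R W σ W')}

/-- The greatest fixpoint `E↑` of `F_{(G,R)}`: the union of all post-fixpoints. -/
def Egfp {X Z E : Type} (Suc Sr : Set E) (G : Automaton X E) (R : Automaton Z E) :
    Set (Set (X × Z)) :=
  ⋃₀ {Ecs | Ecs ⊆ Fop Suc Sr G R Ecs}

/-!
A state of `𝒜(E)` is a set `W` of plant/specification pairs, and `Φ_E` relates `(W, x)` to `z`
exactly when `(x, z) ∈ W`. Condition (b) on the transitions of `𝒜(E)` makes `Φ_E` a forward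
simulation, so every reachable state `(W, x)` of `𝒜(E)||G` has some `(x, z) ∈ W`, where `W`
lies below some member `V` of `E`. The clauses of a controllability set then supply a successor
`V'` of `V` for each uncontrollable or required event, and `V' ∩ SuccSet W σ` is a transition
target of `W`: this yields admissibility and the backward condition.
-/

theorem MatchW.mono_left {X Z E : Type} {G : Automaton X E} {R : Automaton Z E}
    {W V V' : Set (X × Z)} {σ : E} (hWV : W ⊆ V) (hm : MatchW G R V σ V') :
    MatchW G R W σ V' :=
  fun p hp => hm p (hWV hp)

theorem MatchW.inter_succSet {X Z E : Type} {G : Automaton X E} {R : Automaton Z E}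
    {W W' : Set (X × Z)} {σ : E} (hm : MatchW G R W σ W') :
    MatchW G R W σ (W' ∩ SuccSet G R W σ) := by
  intro p hp x' hx'
  obtain ⟨z', hz', hq⟩ := hm p hp x' hx'
  exact ⟨z', hz', hq, p, hp, hx', hz'⟩

theorem autA_trans_inter_succSet {X Z E : Type} {G : Automaton X E} {R : Automaton Z E}
    {Ecs : Set (Set (X × Z))} {W V V' : Set (X × Z)} {σ : E}
    (hWV : W ⊆ V) (hV : V ∈ Ecs) (hV' : V' ∈ Ecs) (hm : MatchW G R V σ V')
    {x x' : X} {z z' : Z} (hxz : (x, z) ∈ W)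
    (hx' : G.trans x σ x') (hz' : R.trans z σ z') (hxz' : (x', z') ∈ V') :
    (AutA G R Ecs).trans W σ (V' ∩ SuccSet G R W σ) :=
  ⟨⟨V, hV, hWV⟩, ⟨V', hV', Set.inter_subset_left⟩,
    ⟨(x, z), hxz, (x', z'), ⟨hxz', (x, z), hxz, hx', hz'⟩, hx', hz'⟩,
    (hm.mono_left hWV).inter_succSet, Set.inter_subset_right⟩

theorem IsSimulation.exists_of_transSeq {X Z E : Type} {G : Automaton X E} {R : Automaton Z E}
    {Φ : Set (X × Z)} (hΦ : IsSimulation G R Φ) {s : List E} {x x' : X} {z : Z}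
    (hxz : (x, z) ∈ Φ) (hs : TransSeq G x s x') : ∃ z', (x', z') ∈ Φ := by
  induction s generalizing x z with
  | nil => exact ⟨z, (hs : x = x') ▸ hxz⟩
  | cons σ s ih =>
    obtain ⟨x₁, hx₁, hs⟩ := hs
    obtain ⟨z₁, -, hxz₁⟩ := hΦ.2 (x, z) hxz σ x₁ hx₁
    exact ih hxz₁ hs

theorem IsSimulation.exists_of_reachable {X Z E : Type} {G : Automaton X E} {R : Automaton Z E}
    {Φ : Set (X × Z)} (hΦ : IsSimulation G R Φ) {x : X} (hx : Reachable G x) :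
    ∃ z, (x, z) ∈ Φ := by
  obtain ⟨s, x₀, hx₀, hs⟩ := hx
  obtain ⟨z₀, -, hxz₀⟩ := hΦ.1 x₀ hx₀
  exact hΦ.exists_of_transSeq hxz₀ hs

def PhiE {X Z : Type} (Ecs : Set (Set (X × Z))) : Set ((Set (X × Z) × X) × Z) :=
  {q | (q.1.2, q.2) ∈ q.1.1 ∧ q.1.1 ∈ PE Ecs}

theorem isSimulation_sync_autA_phiE {X Z E : Type} (G : Automaton X E) (R : Automaton Z E)
    (Ecs : Set (Set (X × Z))) : IsSimulation (Sync (AutA G R Ecs) G) R (PhiE Ecs) := by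
  constructor
  · rintro ⟨W₀, x₀⟩ ⟨⟨hW₀, -, hinit⟩, hx₀⟩
    obtain ⟨z₀, hz₀, hxz₀⟩ := hinit x₀ hx₀
    exact ⟨z₀, hz₀, hxz₀, hW₀⟩
  · rintro ⟨⟨W, x⟩, z⟩ ⟨hxz, -⟩ σ ⟨W', x'⟩ ⟨⟨-, hW', -, hm, -⟩, hx'⟩
    obtain ⟨z', hz', hxz'⟩ := hm (x, z) hxz x' hx'
    exact ⟨z', hz', hxz', hW'⟩

theorem sync_autA_phiE_backward {X Z E : Type} {Suc Sr : Set E}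
    {G : Automaton X E} {R : Automaton Z E} {Ecs : Set (Set (X × Z))}
    (hE : ControlSet Suc Sr G R Ecs) :
    ∀ p ∈ PhiE Ecs, ∀ σ ∈ Sr, ∀ z', R.trans p.2 σ z' →
      ∃ q, (Sync (AutA G R Ecs) G).trans p.1 σ q ∧ (q, z') ∈ PhiE Ecs := by
  rintro ⟨⟨W, x⟩, z⟩ ⟨hxz, V, hV, hWV⟩ σ hσ z' hz'
  obtain ⟨x', V', hV', hx', hxz', hm⟩ := hE.2.2 V hV (x, z) (hWV hxz) σ hσ z' hz'
  exact ⟨(V' ∩ SuccSet G R W σ, x'),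
    ⟨autA_trans_inter_succSet hWV hV hV' hm hxz hx' hz' hxz', hx'⟩,
    ⟨hxz', (x, z), hxz, hx', hz'⟩, V', hV', Set.inter_subset_left⟩

theorem admissible_autA {X Z E : Type} {Suc Sr : Set E}
    {G : Automaton X E} {R : Automaton Z E} {Ecs : Set (Set (X × Z))}
    (hE : ControlSet Suc Sr G R Ecs) : Admissible Suc (AutA G R Ecs) G := by
  rintro ⟨W, x⟩ hreach σ hσ ⟨x', hx'⟩
  obtain ⟨z, hxz, V, hV, hWV⟩ :=
    (isSimulation_sync_autA_phiE G R Ecs).exists_of_reachable hreach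
  obtain ⟨V', hV', hm⟩ := hE.2.1 V hV σ hσ
  obtain ⟨z', hz', hxz'⟩ := hm (x, z) (hWV hxz) x' hx'
  exact ⟨(V' ∩ SuccSet G R W σ, x'),
    autA_trans_inter_succSet hWV hV hV' hm hxz hx' hz' hxz', hx'⟩

/-- `𝒜(E)` is a `Σ_uc`-admissible supervisor and `Φ_E` is a
cc-simulation from `𝒜(E)||G` to `R`. -/
theorem autA_admissible_and_ccSimulation {E X Z : Type} (Suc Sr : Set E)
    (G : Automaton X E) (R : Automaton Z E) (Ecs : Set (Set (X × Z)))
    (hE : ControlSet Suc Sr G R Ecs) :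
    Admissible Suc (AutA G R Ecs) G ∧
    IsCCSimulation Sr (Sync (AutA G R Ecs) G) R
      {q : (Set (X × Z) × X) × Z | (q.1.2, q.2) ∈ q.1.1 ∧ q.1.1 ∈ PE Ecs} ∧
    CCSimulated Sr (Sync (AutA G R Ecs) G) R := by
  have hcc : IsCCSimulation Sr (Sync (AutA G R Ecs) G) R (PhiE Ecs) :=
    ⟨isSimulation_sync_autA_phiE G R Ecs, sync_autA_phiE_backward hE⟩
  exact ⟨admissible_autA hE, hcc, _, hcc⟩
end

section
/- There exists a Σ_uc-admissible supervisor S such that S||G is cc-simulated by R if and only if there exists a Σ_ucr-controllability set from G to R. -/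
/-!
From a supervisor `S` and a cc-simulation `Φ` of `S || G` by `R`, each supervisor state `y` yields
the set of pairs `(x, z)` with `(y, x)` reachable and related to `z` by `Φ`; these sets form a
controllability set, the match conditions being inherited from the forward and backward simulation
clauses along the `S`-transitions. Reachability is kept so that admissibility supplies the
`S`-moves needed for uncontrollable events. Conversely, a controllability set is itself a supervisor whose
states are its members and whose `σ`-moves are the `match` relations; membership `(x, z) ∈ W` is
then a cc-simulation of the composed system by `R`.
-/

section Reachability

variable {S E : Type}

theorem TransSeq.snoc {G : Automaton S E} {x x' x'' : S} {s : List E} {σ : E}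
    (hs : TransSeq G x s x') (hσ : G.trans x' σ x'') : TransSeq G x (s ++ [σ]) x'' := by
  induction s generalizing x with
  | nil => cases hs; exact ⟨x'', hσ, rfl⟩
  | cons τ t ih =>
    obtain ⟨m, hm, hrest⟩ := hs
    exact ⟨m, hm, ih hrest⟩

theorem Reachable.trans {G : Automaton S E} {x x' : S} {σ : E}
    (hx : Reachable G x) (hσ : G.trans x σ x') : Reachable G x' := by
  obtain ⟨s, x₀, hx₀, hs⟩ := hx
  exact ⟨s ++ [σ], x₀, hx₀, hs.snoc hσ⟩

theorem Reachable.mem_of_invariant {G : Automaton S E} {I : Set S} (hinit : G.init ⊆ I)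
    (hstep : ∀ x σ x', x ∈ I → G.trans x σ x' → x' ∈ I) {x : S} (hx : Reachable G x) :
    x ∈ I := by
  obtain ⟨s, x₀, hx₀, hs⟩ := hx
  replace hx₀ := hinit hx₀
  induction s generalizing x₀ with
  | nil => cases hs; exact hx₀
  | cons τ t ih =>
    obtain ⟨m, hm, hrest⟩ := hs
    exact ih m hrest (hstep x₀ τ m hx₀ hm)

end Reachability

section SupervisorToControlSet

variable {E X Y Z : Type} {Suc Sr : Set E} {G : Automaton X E} {R : Automaton Z E}
  {S : Automaton Y E} {Φ : Set ((Y × X) × Z)}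

def supervisedPairs (S : Automaton Y E) (G : Automaton X E) (Φ : Set ((Y × X) × Z)) (y : Y) :
    Set (X × Z) :=
  {q | Reachable (Sync S G) (y, q.1) ∧ ((y, q.1), q.2) ∈ Φ}

theorem matchW_supervisedPairs (hΦ : IsSimulation (Sync S G) R Φ) {y y' : Y} {σ : E}
    (hy : S.trans y σ y') :
    MatchW G R (supervisedPairs S G Φ y) σ (supervisedPairs S G Φ y') := by
  rintro ⟨x, z⟩ ⟨hreach, hxz⟩ x' hx'
  have hsync : (Sync S G).trans (y, x) σ (y', x') := ⟨hy, hx'⟩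
  obtain ⟨z', hz', hx'z'⟩ := hΦ.2 _ hxz σ (y', x') hsync
  exact ⟨z', hz', hreach.trans hsync, hx'z'⟩

theorem controlSet_range_supervisedPairs (hadm : Admissible Suc S G)
    (hΦ : IsCCSimulation Sr (Sync S G) R Φ) {y₀ : Y} (hy₀ : y₀ ∈ S.init) :
    ControlSet Suc Sr G R (Set.range (supervisedPairs S G Φ)) := by
  refine ⟨⟨_, ⟨y₀, rfl⟩, fun x₀ hx₀ => ?_⟩, ?_, ?_⟩
  · have hinit : (y₀, x₀) ∈ (Sync S G).init := ⟨hy₀, hx₀⟩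
    obtain ⟨z₀, hz₀, hΦ₀⟩ := hΦ.1.1 _ hinit
    exact ⟨z₀, hz₀, ⟨[], _, hinit, rfl⟩, hΦ₀⟩
  · rintro _ ⟨y, rfl⟩ σ hσ
    by_cases hmove : ∃ q ∈ supervisedPairs S G Φ y, ∃ x', G.trans q.1 σ x'
    · obtain ⟨q, ⟨hreach, -⟩, hx'⟩ := hmove
      obtain ⟨q, hq⟩ := hadm _ hreach σ hσ hx'
      exact ⟨_, ⟨q.1, rfl⟩, matchW_supervisedPairs hΦ.1 hq.1⟩
    · -- no pair in this state can move by `σ`, so the match is vacuous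
      exact ⟨_, ⟨y, rfl⟩, fun q hq x' hx' => (hmove ⟨q, hq, x', hx'⟩).elim⟩
  · rintro _ ⟨y, rfl⟩ ⟨x, z⟩ ⟨hreach, hxz⟩ σ hσ z' hz'
    obtain ⟨⟨y', x'⟩, ⟨hy', hx'⟩, hx'z'⟩ := hΦ.2 _ hxz σ hσ z' hz'
    exact ⟨x', _, ⟨y', rfl⟩, hx', ⟨hreach.trans ⟨hy', hx'⟩, hx'z'⟩,
      matchW_supervisedPairs hΦ.1 hy'⟩

end SupervisorToControlSet

section ControlSetToSupervisor

variable {E X Z : Type} {Suc Sr : Set E} {G : Automaton X E} {R : Automaton Z E}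
  {Ecs : Set (Set (X × Z))} {W₀ : Set (X × Z)}

def controlSupervisor (G : Automaton X E) (R : Automaton Z E) (Ecs : Set (Set (X × Z)))
    (W₀ : Set (X × Z)) : Automaton (Set (X × Z)) E where
  trans W σ W' := W ∈ Ecs ∧ W' ∈ Ecs ∧ MatchW G R W σ W'
  init := {W₀}

theorem mem_of_reachable_sync_controlSupervisor (hW₀ : W₀ ∈ Ecs)
    {p : Set (X × Z) × X} (hp : Reachable (Sync (controlSupervisor G R Ecs W₀) G) p) :
    p.1 ∈ Ecs := by
  refine Reachable.mem_of_invariant (I := {p | p.1 ∈ Ecs}) ?_ ?_ hp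
  · rintro ⟨W, x₀⟩ ⟨hW, -⟩
    obtain rfl : W = W₀ := hW
    exact hW₀
  · rintro _ _ _ - ⟨⟨-, hW', -⟩, -⟩
    exact hW'

theorem admissible_controlSupervisor
    (hEcs : ∀ W ∈ Ecs, ∀ σ ∈ Suc, ∃ W' ∈ Ecs, MatchW G R W σ W') (hW₀ : W₀ ∈ Ecs) :
    Admissible Suc (controlSupervisor G R Ecs W₀) G := by
  rintro p hp σ hσ ⟨x', hx'⟩
  have hp₁ := mem_of_reachable_sync_controlSupervisor hW₀ hp
  obtain ⟨W', hW', hmatch⟩ := hEcs p.1 hp₁ σ hσ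
  exact ⟨(W', x'), ⟨hp₁, hW', hmatch⟩, hx'⟩

theorem isCCSimulation_sync_controlSupervisor (hEcs : ControlSet Suc Sr G R Ecs)
    (hW₀ : W₀ ∈ Ecs) (hcover : ∀ x₀ ∈ G.init, ∃ z₀ ∈ R.init, (x₀, z₀) ∈ W₀) :
    IsCCSimulation Sr (Sync (controlSupervisor G R Ecs W₀) G) R
      {q | q.1.1 ∈ Ecs ∧ (q.1.2, q.2) ∈ q.1.1} := by
  refine ⟨⟨?_, ?_⟩, ?_⟩
  · rintro ⟨W, x₀⟩ ⟨hW, hx₀⟩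
    obtain rfl : W = W₀ := hW
    obtain ⟨z₀, hz₀, hx₀z₀⟩ := hcover x₀ hx₀
    exact ⟨z₀, hz₀, hW₀, hx₀z₀⟩
  · rintro ⟨⟨W, x⟩, z⟩ ⟨-, hxz⟩ σ ⟨W', x'⟩ ⟨⟨-, hW', hmatch⟩, hx'⟩
    obtain ⟨z', hz', hx'z'⟩ := hmatch (x, z) hxz x' hx'
    exact ⟨z', hz', hW', hx'z'⟩
  · rintro ⟨⟨W, x⟩, z⟩ ⟨hW, hxz⟩ σ hσ z' hz'
    obtain ⟨x', W', hW', hx', hx'z', hmatch⟩ := hEcs.2.2 W hW (x, z) hxz σ hσ z' hz'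
    exact ⟨(W', x'), ⟨⟨hW, hW', hmatch⟩, hx'⟩, hW', hx'z'⟩

end ControlSetToSupervisor

theorem solvable_iff_controlSet_exists_general {E X Z : Type} (Suc Sr : Set E)
    (G : Automaton X E) (R : Automaton Z E) :
    (∃ (Y : Type) (S : Automaton Y E), S.init.Nonempty ∧
      Admissible Suc S G ∧ CCSimulated Sr (Sync S G) R) ↔
    (∃ Ecs : Set (Set (X × Z)), ControlSet Suc Sr G R Ecs) := by
  constructor
  · rintro ⟨Y, S, ⟨y₀, hy₀⟩, hadm, Φ, hΦ⟩
    exact ⟨_, controlSet_range_supervisedPairs hadm hΦ hy₀⟩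
  · rintro ⟨Ecs, hEcs⟩
    obtain ⟨W₀, hW₀, hcover⟩ := hEcs.1
    exact ⟨_, controlSupervisor G R Ecs W₀, ⟨W₀, rfl⟩,
      admissible_controlSupervisor hEcs.2.1 hW₀,
      _, isCCSimulation_sync_controlSupervisor hEcs hW₀ hcover⟩

/-- a `Σ_uc`-admissible supervisor with `S||G ⊑_cc R` exists iff
a `Σ_ucr`-controllability set from `G` to `R` exists. -/
theorem solvable_iff_controlSet_exists {E X Z : Type} (Suc Sr : Set E)
    (G : Automaton X E) (R : Automaton Z E)
    (hG : G.init.Nonempty) (hR : R.init.Nonempty) :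
    (∃ (Y : Type) (S : Automaton Y E), S.init.Nonempty ∧
      Admissible Suc S G ∧ CCSimulated Sr (Sync S G) R) ↔
    (∃ Ecs : Set (Set (X × Z)), ControlSet Suc Sr G R Ecs) :=
  solvable_iff_controlSet_exists_general Suc Sr G R
end
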